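/- Let n ≥ 3, N ≥ 1, L ≥ 0, m_1, …, m_N ≥ 2, and 1 ≤ ν ≤ N. In the group Z_n(Σ_Γ(L)), set c_ν = h_{n-1}^{-1}⋯h_1^{-1} u_ν h_1⋯h_{n-1}. Then ⟨h_{n-1}, c_ν h_{n-1} c_ν^{-1}⟩_{m_ν} = ⟨c_ν h_{n-1} c_ν^{-1}, h_{n-1}⟩_{m_ν}. -/
import Mathlib


namespace StmtS

/-- Generators of `Z_n(Σ_Γ(L))`: `Sum.inl i` is `h_{i+1}`, `Sum.inr (Sum.inl l)` is the
puncture generator `t_{l+1}`, and `Sum.inr (Sum.inr v)` is the cone-point generator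
`u_{v+1}`. -/
abbrev Gen (n L N : ℕ) := Fin (n - 1) ⊕ (Fin L ⊕ Fin N)

def sh {n L N : ℕ} (i : Fin (n - 1)) : FreeGroup (Gen n L N) := FreeGroup.of (Sum.inl i)

def st {n L N : ℕ} (l : Fin L) : FreeGroup (Gen n L N) := FreeGroup.of (Sum.inr (Sum.inl l))

def su {n L N : ℕ} (v : Fin N) : FreeGroup (Gen n L N) := FreeGroup.of (Sum.inr (Sum.inr v))

/-- Defining relations of `Z_n(Σ_Γ(L))` for `Γ = Z_{m_1} * ⋯ * Z_{m_N}`. -/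
def srels (n L N : ℕ) (m : Fin N → ℕ) : Set (FreeGroup (Gen n L N)) :=
  {r | (∃ v : Fin N, r = su v ^ m v)
    ∨ (∃ i j : Fin (n - 1), (i : ℕ) + 1 = (j : ℕ) ∧
        r = sh i * sh j * sh i * (sh j * sh i * sh j)⁻¹)
    ∨ (∃ i j : Fin (n - 1), (i : ℕ) + 2 ≤ (j : ℕ) ∧
        r = sh i * sh j * (sh j * sh i)⁻¹)
    ∨ (∃ (l : Fin L) (i : Fin (n - 1)), 1 ≤ (i : ℕ) ∧
        r = st l * sh i * (sh i * st l)⁻¹)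
    ∨ (∃ (v : Fin N) (i : Fin (n - 1)), 1 ≤ (i : ℕ) ∧
        r = su v * sh i * (sh i * su v)⁻¹)
    ∨ (∃ (l : Fin L) (i : Fin (n - 1)), (i : ℕ) = 0 ∧
        r = (sh i * st l * sh i) * st l * (st l * (sh i * st l * sh i))⁻¹)
    ∨ (∃ (v : Fin N) (i : Fin (n - 1)), (i : ℕ) = 0 ∧
        r = (sh i * su v * sh i) * su v * (su v * (sh i * su v * sh i))⁻¹)
    ∨ (∃ (l₁ l₂ : Fin L) (i : Fin (n - 1)), (l₁ : ℕ) < (l₂ : ℕ) ∧ (i : ℕ) = 0 ∧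
        r = st l₁ * ((sh i)⁻¹ * st l₂ * sh i) * (((sh i)⁻¹ * st l₂ * sh i) * st l₁)⁻¹)
    ∨ (∃ (v₁ v₂ : Fin N) (i : Fin (n - 1)), (v₁ : ℕ) < (v₂ : ℕ) ∧ (i : ℕ) = 0 ∧
        r = su v₁ * ((sh i)⁻¹ * su v₂ * sh i) * (((sh i)⁻¹ * su v₂ * sh i) * su v₁)⁻¹)
    ∨ (∃ (l : Fin L) (v : Fin N) (i : Fin (n - 1)), (i : ℕ) = 0 ∧
        r = st l * ((sh i)⁻¹ * su v * sh i) * (((sh i)⁻¹ * su v * sh i) * st l)⁻¹)}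

/-- The orbifold braid group `Z_n(Σ_Γ(L))`. -/
abbrev S (n L N : ℕ) (m : Fin N → ℕ) := PresentedGroup (srels n L N m)

/-- The product `h_1 h_2 ⋯ h_{n-1}` in `Z_n(Σ_Γ(L))`. -/
def hprod (n L N : ℕ) (m : Fin N → ℕ) : S n L N m :=
  (List.ofFn (fun i : Fin (n - 1) => (PresentedGroup.of (Sum.inl i) : S n L N m))).prod

/-- `c_ν = h_{n-1}⁻¹ ⋯ h_1⁻¹ · u_ν · h_1 ⋯ h_{n-1}` in `Z_n(Σ_Γ(L))`. -/
def c (n L N : ℕ) (m : Fin N → ℕ) (v : Fin N) : S n L N m :=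
  (hprod n L N m)⁻¹ * PresentedGroup.of (Sum.inr (Sum.inr v)) * hprod n L N m

/-- `alt x y k` is the alternating product `x y x y ⋯` with `k` factors, starting with `x`. -/
def alt {G : Type*} [Monoid G] (x y : G) : ℕ → G
  | 0 => 1
  | k + 1 => x * alt y x k


section Abstract
variable {G : Type*} [Group G]

lemma alt_add_two (x y : G) (k : ℕ) : alt x y (k+2) = x * y * alt x y k := by
  simp [alt, mul_assoc]

lemma alt_even (x y : G) (k : ℕ) : alt x y (2*k) = (x*y)^k := by
  induction k with
  | zero => simp [alt]
  | succ k ih =>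
      have h2 : 2*(k+1) = 2*k + 2 := by ring
      rw [h2, alt_add_two, ih, pow_succ']

lemma alt_odd (x y : G) (k : ℕ) : alt x y (2*k+1) = (x*y)^k * x := by
  induction k with
  | zero => simp [alt]
  | succ k ih =>
      have h2 : 2*(k+1)+1 = (2*k+1) + 2 := by ring
      rw [h2, alt_add_two, ih, pow_succ']
      group

lemma alt_conj (q x y : G) (k : ℕ) :
    alt (q⁻¹*x*q) (q⁻¹*y*q) k = q⁻¹ * alt x y k * q := by
  induction k generalizing x y with
  | zero => simp [alt]
  | succ k ih => rw [alt, alt, ih y x]; group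

lemma dihedral (g u : G) (m : ℕ) (rel : g*u*g*u = u*g*u*g) (hu : u^m = 1) :
    alt g (u*g*u⁻¹) m = alt (u*g*u⁻¹) g m := by
  have hΔu : (g*u*g*u) * u = u * (g*u*g*u) := by
    conv_lhs => rw [rel]
    group
  have hΔg : (g*u*g*u) * g = g * (g*u*g*u) := by
    conv_rhs => rw [rel]
    group
  have hcu : Commute (g*u*g*u) u := hΔu
  have hcg : Commute (g*u*g*u) g := hΔg
  have e1 : g * (u*g*u⁻¹) = (g*u*g*u) * (u⁻¹*u⁻¹) := by group
  have e2 : (u*g*u⁻¹) * g = (g*u*g*u) * (g⁻¹ * (u⁻¹*u⁻¹) * g) := by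
    rw [rel]; group
  have hs : Commute (g*u*g*u) (u⁻¹*u⁻¹) := (hcu.inv_right).mul_right hcu.inv_right
  have hs2 : Commute (g*u*g*u) (g⁻¹ * (u⁻¹*u⁻¹) * g) :=
    ((hcg.inv_right).mul_right hs).mul_right hcg
  have hpow : ∀ k : ℕ, (u⁻¹*u⁻¹)^k = (u^(2*k))⁻¹ := by
    intro k
    have huu : u⁻¹*u⁻¹ = (u*u)⁻¹ := by group
    rw [huu, inv_pow, ← pow_two, ← pow_mul]
  rcases Nat.even_or_odd m with ⟨k, hk⟩ | ⟨k, hk⟩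
  · have hm : m = 2*k := by omega
    subst hm
    rw [alt_even, alt_even, e1, e2, hs.mul_pow, hs2.mul_pow, hpow]
    have hck : (g⁻¹ * (u⁻¹*u⁻¹) * g)^k = g⁻¹ * (u⁻¹*u⁻¹)^k * g := by
      have h := conj_pow (i := k) (a := g⁻¹) (b := u⁻¹*u⁻¹)
      simpa using h
    rw [hck, hpow, hu]
    simp
  · subst hk
    rw [alt_odd, alt_odd, e1, e2, hs.mul_pow, hs2.mul_pow, hpow]
    have hck : (g⁻¹ * (u⁻¹*u⁻¹) * g)^k = g⁻¹ * (u⁻¹*u⁻¹)^k * g := by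
      have h := conj_pow (i := k) (a := g⁻¹) (b := u⁻¹*u⁻¹)
      simpa using h
    rw [hck, hpow]
    have hu2k : (u^(2*k))⁻¹ = u := by
      have h : u^(2*k) * u = 1 := by rw [← pow_succ]; exact hu
      exact inv_eq_of_mul_eq_one_right h
    rw [hu2k]
    have key : u * g = (g⁻¹ * u * g) * (u*g*u⁻¹) := by
      have h2 : (g⁻¹ * u * g) * (u*g*u⁻¹) = g⁻¹ * (u*g*u*g) * u⁻¹ := by group
      rw [h2, ← rel]; group
    conv_lhs => rw [mul_assoc, key]
    group

end Abstract

variable {n L N : ℕ} {m : Fin N → ℕ}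

/-- `HH i = h_{i+1}` with junk value `1` for out-of-range `i`. -/
def HH (n L N : ℕ) (m : Fin N → ℕ) (i : ℕ) : S n L N m :=
  if h : i < n - 1 then PresentedGroup.of (Sum.inl ⟨i, h⟩) else 1

def UU (n L N : ℕ) (m : Fin N → ℕ) (v : Fin N) : S n L N m :=
  PresentedGroup.of (Sum.inr (Sum.inr v))

/-- `FF j = h_{n-j} ⋯ h_{n-1}` (suffix products). -/
def FF (n L N : ℕ) (m : Fin N → ℕ) : ℕ → S n L N m
  | 0 => 1
  | j+1 => HH n L N m (n-2-j) * FF n L N m j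

lemma relS {r : FreeGroup (Gen n L N)} (hr : r ∈ srels n L N m) :
    PresentedGroup.mk (srels n L N m) r = 1 :=
  (QuotientGroup.eq_one_iff r).mpr (Subgroup.subset_normalClosure hr)

lemma rel_upow (v : Fin N) : (UU n L N m v) ^ (m v) = 1 := by
  have h := relS (n := n) (L := L) (m := m) (Or.inl ⟨v, rfl⟩)
  simpa [su, UU, map_pow, PresentedGroup.of] using h

lemma rel_braid (i : ℕ) (h : i + 1 < n - 1) :
    HH n L N m i * HH n L N m (i+1) * HH n L N m i
      = HH n L N m (i+1) * HH n L N m i * HH n L N m (i+1) := by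
  have hi : i < n - 1 := by omega
  have hr := relS (n := n) (L := L) (m := m)
    (Or.inr (Or.inl ⟨⟨i, hi⟩, ⟨i+1, h⟩, rfl, rfl⟩))
  rw [HH, HH, dif_pos hi, dif_pos h]
  simp only [sh, map_mul, map_inv, PresentedGroup.of, mul_inv_eq_one] at hr
  exact hr

lemma rel_comm (i j : ℕ) (h : i + 2 ≤ j) :
    HH n L N m i * HH n L N m j = HH n L N m j * HH n L N m i := by
  by_cases hj : j < n - 1
  · have hi : i < n - 1 := by omega
    have hr := relS (n := n) (L := L) (m := m)
      (Or.inr (Or.inr (Or.inl ⟨⟨i, hi⟩, ⟨j, hj⟩, h, rfl⟩)))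
    rw [HH, HH, dif_pos hi, dif_pos hj]
    simp only [sh, map_mul, map_inv, PresentedGroup.of, mul_inv_eq_one] at hr
    exact hr
  · simp only [HH, dif_neg hj]
    simp

lemma rel_uh (v : Fin N) (i : ℕ) (h1 : 1 ≤ i) :
    UU n L N m v * HH n L N m i = HH n L N m i * UU n L N m v := by
  by_cases hi : i < n - 1
  · have hr := relS (n := n) (L := L) (m := m)
      (Or.inr (Or.inr (Or.inr (Or.inr (Or.inl ⟨v, ⟨i, hi⟩, h1, rfl⟩)))))
    rw [HH, dif_pos hi]
    simp only [sh, su, UU, map_mul, map_inv, PresentedGroup.of, mul_inv_eq_one] at hr ⊢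
    exact hr
  · rw [HH, dif_neg hi]
    simp

lemma rel_ugug (v : Fin N) (h0 : 0 < n - 1) :
    HH n L N m 0 * UU n L N m v * HH n L N m 0 * UU n L N m v
      = UU n L N m v * (HH n L N m 0 * UU n L N m v * HH n L N m 0) := by
  have hr := relS (n := n) (L := L) (m := m)
    (Or.inr (Or.inr (Or.inr (Or.inr (Or.inr (Or.inr (Or.inl ⟨v, ⟨0, h0⟩, rfl, rfl⟩)))))))
  rw [HH, dif_pos h0]
  simp only [sh, su, UU, map_mul, map_inv, PresentedGroup.of, mul_inv_eq_one] at hr ⊢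
  rw [← hr]

lemma comm_FF (x : S n L N m) (j : ℕ)
    (hx : ∀ t, t < j → x * HH n L N m (n-2-t) = HH n L N m (n-2-t) * x) :
    x * FF n L N m j = FF n L N m j * x := by
  induction j with
  | zero => simp [FF]
  | succ j ih =>
      rw [FF, ← mul_assoc, hx j (by omega), mul_assoc,
        ih (fun t ht => hx t (by omega)), mul_assoc]


lemma braid_conj {G : Type*} [Group G] (a b : G) (h : a*b*a = b*a*b) : a*b*a⁻¹ = b⁻¹*a*b := by
  have h2 : a*b*a⁻¹ = b⁻¹*(b*a*b)*a⁻¹ := by group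
  rw [h2, ← h]; group

lemma conj_swap {G : Type*} [Group G] (A B X : G) (h : A * B = B * A) :
    A * (B⁻¹ * X * B) * A⁻¹ = B⁻¹ * (A * X * A⁻¹) * B := by
  have hc : Commute A B := h
  have h1 : A * B⁻¹ = B⁻¹ * A := hc.inv_right.eq
  have h2 : B * A⁻¹ = A⁻¹ * B := hc.symm.inv_right.eq
  calc A * (B⁻¹ * X * B) * A⁻¹ = (A * B⁻¹) * X * (B * A⁻¹) := by group
    _ = (B⁻¹ * A) * X * (A⁻¹ * B) := by rw [h1, h2]
    _ = B⁻¹ * (A * X * A⁻¹) * B := by group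

lemma keyB : ∀ j : ℕ, j < n - 1 →
    FF n L N m (j+1) * HH n L N m (n-2) * (FF n L N m (j+1))⁻¹
      = (FF n L N m j)⁻¹ * HH n L N m (n-2-j) * FF n L N m j := by
  intro j
  induction j with
  | zero =>
      intro _
      show (HH n L N m (n-2-0) * FF n L N m 0) * HH n L N m (n-2) * _ = _
      simp [FF]
  | succ j ih =>
      intro hj
      have ihj := ih (by omega)
      have hi1 : (n-2-(j+1)) + 1 = n-2-j := by omega
      have hbr := rel_braid (n := n) (L := L) (m := m) (n-2-(j+1)) (by omega)
      rw [hi1] at hbr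
      have hcomm : HH n L N m (n-2-(j+1)) * FF n L N m j
          = FF n L N m j * HH n L N m (n-2-(j+1)) :=
        comm_FF (HH n L N m (n-2-(j+1))) j (fun t ht => rel_comm (n-2-(j+1)) (n-2-t) (by omega))
      calc FF n L N m (j+2) * HH n L N m (n-2) * (FF n L N m (j+2))⁻¹
          = HH n L N m (n-2-(j+1)) * (FF n L N m (j+1) * HH n L N m (n-2) * (FF n L N m (j+1))⁻¹)
              * (HH n L N m (n-2-(j+1)))⁻¹ := by
            have hFF : FF n L N m (j+2) = HH n L N m (n-2-(j+1)) * FF n L N m (j+1) := rfl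
            rw [hFF]; group
        _ = HH n L N m (n-2-(j+1)) * ((FF n L N m j)⁻¹ * HH n L N m (n-2-j) * FF n L N m j)
              * (HH n L N m (n-2-(j+1)))⁻¹ := by rw [ihj]
        _ = (FF n L N m j)⁻¹ * (HH n L N m (n-2-(j+1)) * HH n L N m (n-2-j)
              * (HH n L N m (n-2-(j+1)))⁻¹) * FF n L N m j := conj_swap _ _ _ hcomm
        _ = (FF n L N m j)⁻¹ * ((HH n L N m (n-2-j))⁻¹ * HH n L N m (n-2-(j+1))
              * HH n L N m (n-2-j)) * FF n L N m j := by rw [braid_conj _ _ hbr]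
        _ = (HH n L N m (n-2-j) * FF n L N m j)⁻¹ * HH n L N m (n-2-(j+1))
              * (HH n L N m (n-2-j) * FF n L N m j) := by group
        _ = (FF n L N m (j+1))⁻¹ * HH n L N m (n-2-(j+1)) * FF n L N m (j+1) := rfl

lemma FF_ofFn : ∀ j : ℕ, j ≤ n - 1 →
    FF n L N m j = (List.ofFn (fun i : Fin j => HH n L N m ((n-1) - j + (i:ℕ)))).prod := by
  intro j
  induction j with
  | zero => intro _; simp [FF]
  | succ j ih =>
      intro hj
      rw [List.ofFn_succ, List.prod_cons]
      have h0 : (n-1) - (j+1) + ((0 : Fin (j+1)) : ℕ) = n-2-j := by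
        simp; omega
      have hfun : (fun i : Fin j => HH n L N m ((n-1) - (j+1) + ((i.succ : Fin (j+1)) : ℕ)))
          = (fun i : Fin j => HH n L N m ((n-1) - j + (i:ℕ))) := by
        funext i
        congr 1
        simp [Fin.val_succ]
        omega
      rw [hfun, ← ih (by omega), h0]
      rfl

lemma hprod_eq : hprod n L N m = FF n L N m (n-1) := by
  rw [FF_ofFn (n-1) le_rfl, hprod]
  have hfun : (fun i : Fin (n-1) => (PresentedGroup.of (Sum.inl i) : S n L N m))
      = fun i : Fin (n-1) => HH n L N m ((n-1) - (n-1) + (i:ℕ)) := by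
    funext i
    have hidx : (n-1) - (n-1) + (i:ℕ) = (i:ℕ) := by omega
    rw [hidx, HH, dif_pos i.isLt]
  rw [hfun]


theorem stmt_12 (n L N : ℕ) (m : Fin N → ℕ) (hn : 3 ≤ n) (hN : 1 ≤ N) (hL : 0 ≤ L)
    (hm : ∀ v : Fin N, 2 ≤ m v) (ν : Fin N) :
    alt (PresentedGroup.of (Sum.inl ⟨n - 2, by omega⟩) : S n L N m)
        (c n L N m ν * PresentedGroup.of (Sum.inl ⟨n - 2, by omega⟩) * (c n L N m ν)⁻¹)
        (m ν) =
      alt (c n L N m ν * PresentedGroup.of (Sum.inl ⟨n - 2, by omega⟩) * (c n L N m ν)⁻¹)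
        (PresentedGroup.of (Sum.inl ⟨n - 2, by omega⟩) : S n L N m) (m ν) := by
  have h0 : 0 < n - 1 := by omega
  have hH : (PresentedGroup.of (Sum.inl ⟨n - 2, by omega⟩) : S n L N m)
      = HH n L N m (n-2) := by
    rw [HH, dif_pos (show n-2 < n-1 by omega)]
  have hk0 := keyB (n := n) (L := L) (m := m) (n-2) (by omega)
  have e1 : n-2+1 = n-1 := by omega
  have e2 : n-2-(n-2) = 0 := by omega
  rw [e1, e2] at hk0
  have hUV : UU n L N m ν * FF n L N m (n-2) = FF n L N m (n-2) * UU n L N m ν :=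
    comm_FF _ (n-2) (fun t ht => rel_uh ν (n-2-t) (by omega))
  have hcUV : Commute (UU n L N m ν) (FF n L N m (n-2)) := hUV
  have hc : c n L N m ν = (FF n L N m (n-1))⁻¹ * UU n L N m ν * FF n L N m (n-1) := by
    unfold c
    rw [hprod_eq]
    rfl
  have hq_h : HH n L N m (n-2)
      = (FF n L N m (n-2) * FF n L N m (n-1))⁻¹ * HH n L N m 0
          * (FF n L N m (n-2) * FF n L N m (n-1)) := by
    calc HH n L N m (n-2)
        = (FF n L N m (n-1))⁻¹ * (FF n L N m (n-1) * HH n L N m (n-2)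
            * (FF n L N m (n-1))⁻¹) * FF n L N m (n-1) := by group
      _ = (FF n L N m (n-1))⁻¹ * ((FF n L N m (n-2))⁻¹ * HH n L N m 0
            * FF n L N m (n-2)) * FF n L N m (n-1) := by rw [hk0]
      _ = _ := by group
  have hb : c n L N m ν * HH n L N m (n-2) * (c n L N m ν)⁻¹
      = (FF n L N m (n-2) * FF n L N m (n-1))⁻¹
          * (UU n L N m ν * HH n L N m 0 * (UU n L N m ν)⁻¹)
          * (FF n L N m (n-2) * FF n L N m (n-1)) := by
    have hUVi : UU n L N m ν * (FF n L N m (n-2))⁻¹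
        = (FF n L N m (n-2))⁻¹ * UU n L N m ν := hcUV.inv_right.eq
    have hVUi : FF n L N m (n-2) * (UU n L N m ν)⁻¹
        = (UU n L N m ν)⁻¹ * FF n L N m (n-2) := hcUV.symm.inv_right.eq
    calc c n L N m ν * HH n L N m (n-2) * (c n L N m ν)⁻¹
        = (FF n L N m (n-1))⁻¹ * UU n L N m ν * (FF n L N m (n-1) * HH n L N m (n-2)
            * (FF n L N m (n-1))⁻¹) * (UU n L N m ν)⁻¹ * FF n L N m (n-1) := by
          rw [hc]; group
      _ = (FF n L N m (n-1))⁻¹ * UU n L N m ν * ((FF n L N m (n-2))⁻¹ * HH n L N m 0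
            * FF n L N m (n-2)) * (UU n L N m ν)⁻¹ * FF n L N m (n-1) := by rw [hk0]
      _ = (FF n L N m (n-1))⁻¹ * (UU n L N m ν * (FF n L N m (n-2))⁻¹) * HH n L N m 0
            * (FF n L N m (n-2) * (UU n L N m ν)⁻¹) * FF n L N m (n-1) := by group
      _ = (FF n L N m (n-1))⁻¹ * ((FF n L N m (n-2))⁻¹ * UU n L N m ν) * HH n L N m 0
            * ((UU n L N m ν)⁻¹ * FF n L N m (n-2)) * FF n L N m (n-1) := by
          rw [hUVi, hVUi]
      _ = _ := by group
  rw [hH, hb, hq_h, alt_conj, alt_conj]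
  congr 1
  congr 1
  have hrel : HH n L N m 0 * UU n L N m ν * HH n L N m 0 * UU n L N m ν
      = UU n L N m ν * HH n L N m 0 * UU n L N m ν * HH n L N m 0 := by
    rw [rel_ugug ν h0]
    group
  exact dihedral (HH n L N m 0) (UU n L N m ν) (m ν) hrel (rel_upow ν)

end StmtS
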